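/- If f is ρ-SP then Stab_ρ[f] ≥ ρ^{|T|}·|f̂_T| for every T⊆[n]; in particular Stab_ρ[f] ≥ max_{S⊆[n]} ρ^{|S|}|f̂_S|. -/
import Mathlib


/-- Map a Boolean bit to ±1 ∈ ℝ (true ↦ 1, false ↦ -1). -/
def toR (b : Bool) : ℝ := if b then 1 else -1

/-- The character χ_S(x) = ∏_{i∈S} x_i. -/
def chi {n : ℕ} (S : Finset (Fin n)) (x : Fin n → Bool) : ℝ := ∏ i ∈ S, toR (x i)

/-- Fourier coefficient f̂_S = E[f(X) χ_S(X)]. -/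
noncomputable def coeff {n : ℕ} (f : (Fin n → Bool) → ℝ) (S : Finset (Fin n)) : ℝ :=
  (∑ x : Fin n → Bool, f x * chi S x) / 2 ^ n

/-- Noise operator via the Fourier expansion: T_ρ f (y) = Σ_S ρ^{|S|} f̂_S y^S. -/
noncomputable def TF {n : ℕ} (ρ : ℝ) (f : (Fin n → Bool) → ℝ) (y : Fin n → Bool) : ℝ :=
  ∑ S : Finset (Fin n), ρ ^ S.card * coeff f S * chi S y

/-- f is ρ-self-predicting. -/
noncomputable def IsSP {n : ℕ} (ρ : ℝ) (f : (Fin n → Bool) → ℝ) : Prop :=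
  ∀ y : Fin n → Bool, TF ρ f y ≠ 0 → Real.sign (TF ρ f y) = f y

lemma abs_toR (b : Bool) : |toR b| = 1 := by cases b <;> simp [toR]

lemma abs_chi {n : ℕ} (S : Finset (Fin n)) (x : Fin n → Bool) : |chi S x| = 1 := by
  rw [chi, Finset.abs_prod]
  simp [abs_toR]

lemma chi_eq_prod_univ {n : ℕ} (S : Finset (Fin n)) (x : Fin n → Bool) :
    chi S x = ∏ i : Fin n, (if i ∈ S then toR (x i) else 1) := by
  rw [chi, Finset.prod_ite_mem, Finset.univ_inter]

lemma orth {n : ℕ} (S T : Finset (Fin n)) :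
    ∑ y : Fin n → Bool, chi S y * chi T y = if S = T then (2:ℝ)^n else 0 := by
  have h1 : ∀ y : Fin n → Bool, chi S y * chi T y
      = ∏ i : Fin n, ((if i ∈ S then toR (y i) else 1) * (if i ∈ T then toR (y i) else 1)) := by
    intro y
    rw [chi_eq_prod_univ, chi_eq_prod_univ, ← Finset.prod_mul_distrib]
  simp only [h1]
  rw [← Fintype.piFinset_univ]
  rw [← Finset.prod_univ_sum (t := fun _ : Fin n => (Finset.univ : Finset Bool))
    (f := fun i b => (if i ∈ S then toR b else 1) * (if i ∈ T then toR b else 1))]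
  have hfac : ∀ i : Fin n,
      (∑ b : Bool, (if i ∈ S then toR b else 1) * (if i ∈ T then toR b else 1))
        = if (i ∈ S ↔ i ∈ T) then 2 else 0 := by
    intro i
    by_cases hS : i ∈ S <;> by_cases hT : i ∈ T <;>
      simp [hS, hT, Fintype.sum_bool, toR] <;> norm_num
  by_cases hST : S = T
  · subst hST
    simp only [hfac]
    simp
  · obtain ⟨i, hi⟩ : ∃ i, ¬(i ∈ S ↔ i ∈ T) := by
      by_contra h
      push_neg at h
      exact hST (Finset.ext h)
    rw [if_neg hST]
    apply Finset.prod_eq_zero (Finset.mem_univ i)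
    rw [hfac, if_neg hi]

lemma sum_f_chi {n : ℕ} (f : (Fin n → Bool) → ℝ) (S : Finset (Fin n)) :
    ∑ y : Fin n → Bool, f y * chi S y = 2 ^ n * coeff f S := by
  rw [coeff]
  field_simp

lemma stab_eq {n : ℕ} (ρ : ℝ) (f : (Fin n → Bool) → ℝ) :
    ∑ S : Finset (Fin n), ρ ^ S.card * (coeff f S) ^ 2
      = (∑ y : Fin n → Bool, f y * TF ρ f y) / 2 ^ n := by
  have h : ∑ y : Fin n → Bool, f y * TF ρ f y
      = 2 ^ n * ∑ S : Finset (Fin n), ρ ^ S.card * (coeff f S) ^ 2 := by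
    simp only [TF, Finset.mul_sum]
    rw [Finset.sum_comm]
    apply Finset.sum_congr rfl
    intro S _
    have : ∑ y : Fin n → Bool, f y * (ρ ^ S.card * coeff f S * chi S y)
        = ρ ^ S.card * coeff f S * ∑ y : Fin n → Bool, f y * chi S y := by
      rw [Finset.mul_sum]; apply Finset.sum_congr rfl; intro y _; ring
    rw [this, sum_f_chi]
    ring
  rw [h]
  field_simp

lemma TF_chi {n : ℕ} (ρ : ℝ) (f : (Fin n → Bool) → ℝ) (T : Finset (Fin n)) :
    ∑ y : Fin n → Bool, TF ρ f y * chi T y = 2 ^ n * (ρ ^ T.card * coeff f T) := by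
  simp only [TF, Finset.sum_mul]
  rw [Finset.sum_comm]
  have h : ∀ S : Finset (Fin n),
      ∑ y : Fin n → Bool, ρ ^ S.card * coeff f S * chi S y * chi T y
        = ρ ^ S.card * coeff f S * (if S = T then (2:ℝ)^n else 0) := by
    intro S
    rw [← orth S T, Finset.mul_sum]
    apply Finset.sum_congr rfl
    intro y _
    ring
  simp only [h]
  simp only [mul_ite, mul_zero]
  rw [Finset.sum_ite_eq' Finset.univ T]
  simp only [Finset.mem_univ, if_true]
  ring

/-- If f is ρ-SP then Stab_ρ[f] = Σ_S ρ^{|S|} f̂_S² ≥ ρ^{|T|}|f̂_T|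
for every T ⊆ [n] (hence ≥ the maximum over all T). -/
theorem sp_stability_lower_bound {n : ℕ} (ρ : ℝ) (hρ0 : 0 ≤ ρ) (hρ1 : ρ ≤ 1)
    (f : (Fin n → Bool) → ℝ) (hf : ∀ x, f x = 1 ∨ f x = -1)
    (hSP : IsSP ρ f) :
    ∀ T : Finset (Fin n),
      ρ ^ T.card * |coeff f T| ≤ ∑ S : Finset (Fin n), ρ ^ S.card * (coeff f S) ^ 2 := by
  intro T
  have h2n : (0:ℝ) < 2 ^ n := by positivity
  have hfabs : ∀ y, f y * TF ρ f y = |TF ρ f y| := by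
    intro y
    by_cases h : TF ρ f y = 0
    · simp [h]
    · rw [← hSP y h]
      rcases lt_trichotomy (TF ρ f y) 0 with hlt | heq | hgt
      · rw [Real.sign_of_neg hlt, abs_of_neg hlt]; ring
      · exact absurd heq h
      · rw [Real.sign_of_pos hgt, abs_of_pos hgt]; ring
  rw [stab_eq]
  have key : ρ ^ T.card * |coeff f T| = |∑ y : Fin n → Bool, TF ρ f y * chi T y| / 2 ^ n := by
    rw [TF_chi, abs_mul, abs_mul, abs_of_nonneg (pow_nonneg hρ0 _),
      abs_of_pos h2n]
    field_simp
  rw [key]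
  gcongr
  calc |∑ y : Fin n → Bool, TF ρ f y * chi T y|
      ≤ ∑ y : Fin n → Bool, |TF ρ f y * chi T y| := Finset.abs_sum_le_sum_abs _ _
    _ = ∑ y : Fin n → Bool, f y * TF ρ f y := by
        apply Finset.sum_congr rfl
        intro y _
        rw [abs_mul, abs_chi, mul_one, hfabs]
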